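/- arXiv:1709.03403 — 6 statements merged into one kernel-verified Lean document; each statement's English description precedes it below -/
import Mathlib

section
/- The polynomial η_6(x,y) = x^6 + (5/2)x^3y^3 − (1/8)y^6 is invariant under σ_{3/2}, i.e., η_6((x + (1/2)y)·√(2/3), (x − y)·√(2/3)) = η_6(x,y). -/
/-! The substitution `(x, y) ↦ (x + y/2, x - y)` multiplies `η₆` by `27/8`, and `η₆` is homogeneous
of degree `6`, so the normalizing factor `√(2/3)` contributes `(2/3)^3 = 8/27`, which cancels it. -/

variable {K : Type*} [Field K]

def eta6 (x y : K) : K := x ^ 6 + (5 / 2) * x ^ 3 * y ^ 3 - (1 / 8) * y ^ 6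

theorem eta6_mul_mul (c x y : K) : eta6 (c * x) (c * y) = c ^ 6 * eta6 x y := by
  unfold eta6; ring

theorem eta6_add_half_sub [CharZero K] (x y : K) :
    eta6 (x + (1 / 2) * y) (x - y) = (27 / 8) * eta6 x y := by
  unfold eta6; ring

theorem Complex.ofReal_sqrt_two_thirds_pow_six : (Real.sqrt (2 / 3) : ℂ) ^ 6 = 8 / 27 := by
  have hsq : Real.sqrt (2 / 3) ^ 2 = 2 / 3 := Real.sq_sqrt (by norm_num)
  have hreal : Real.sqrt (2 / 3) ^ 6 = 8 / 27 := by
    rw [show Real.sqrt (2 / 3) ^ 6 = (Real.sqrt (2 / 3) ^ 2) ^ 3 by ring, hsq]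
    norm_num
  rw [← Complex.ofReal_pow, hreal]
  norm_num

/-- `η_6(x,y) = x^6 + (5/2)x^3y^3 − (1/8)y^6` is invariant under `σ_{3/2}`. -/
theorem eta6_sigma_three_halves_invariant :
    ∀ x y : ℂ,
      ((Real.sqrt (2 / 3) : ℂ) * (x + (1 / 2) * y)) ^ 6
        + (5 / 2) * ((Real.sqrt (2 / 3) : ℂ) * (x + (1 / 2) * y)) ^ 3
            * ((Real.sqrt (2 / 3) : ℂ) * (x - y)) ^ 3
        - (1 / 8) * ((Real.sqrt (2 / 3) : ℂ) * (x - y)) ^ 6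
      = x ^ 6 + (5 / 2) * x ^ 3 * y ^ 3 - (1 / 8) * y ^ 6 := by
  intro x y
  change eta6 _ _ = eta6 x y
  rw [eta6_mul_mul, eta6_add_half_sub, Complex.ofReal_sqrt_two_thirds_pow_six, ← mul_assoc]
  norm_num
end

section
/- The polynomial η_{24}(x,y) = x^{24} + (253/4)x^{18}y^6 + (1265/32)x^{15}y^9 + (7659/256)x^{12}y^{12} − (1265/256)x^9y^{15} + (253/256)x^6y^{18} + (1/4096)y^{24} is invariant under the MacWilliams transform σ_{3/2}. -/
/-!
`σ_{3/2}` is the linear substitution `(x, y) ↦ (x + y/2, x - y)` followed by scaling with `√(2/3)`.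
Since `η₂₄` is homogeneous of degree 24, the scaling contributes the rational factor `(2/3)^12`,
and what remains is a polynomial identity with rational coefficients.
-/

def eta24 {K : Type*} [Field K] (x y : K) : K :=
  x ^ 24 + (253 / 4) * x ^ 18 * y ^ 6 + (1265 / 32) * x ^ 15 * y ^ 9
    + (7659 / 256) * x ^ 12 * y ^ 12 - (1265 / 256) * x ^ 9 * y ^ 15
    + (253 / 256) * x ^ 6 * y ^ 18 + (1 / 4096) * y ^ 24

theorem eta24_mul_mul {K : Type*} [Field K] (c x y : K) :
    eta24 (c * x) (c * y) = c ^ 24 * eta24 x y := by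
  unfold eta24
  ring

theorem eta24_macWilliams {K : Type*} [Field K] [CharZero K] (x y : K) :
    (2 / 3) ^ 12 * eta24 (x + 1 / 2 * y) (x - y) = eta24 x y := by
  unfold eta24
  ring

theorem Complex.ofReal_sqrt_pow_two_mul {a : ℝ} (ha : 0 ≤ a) (n : ℕ) :
    (Real.sqrt a : ℂ) ^ (2 * n) = (a : ℂ) ^ n := by
  rw [pow_mul, ← Complex.ofReal_pow, Real.sq_sqrt ha]

/-- `η_{24}` is invariant under the MacWilliams transform `σ_{3/2}`. -/
theorem eta24_sigma_three_halves_invariant :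
    ∀ x y : ℂ,
      (fun u v : ℂ =>
        u ^ 24 + (253 / 4) * u ^ 18 * v ^ 6 + (1265 / 32) * u ^ 15 * v ^ 9
          + (7659 / 256) * u ^ 12 * v ^ 12 - (1265 / 256) * u ^ 9 * v ^ 15
          + (253 / 256) * u ^ 6 * v ^ 18 + (1 / 4096) * v ^ 24)
        ((Real.sqrt (2 / 3) : ℂ) * (x + (1 / 2) * y))
        ((Real.sqrt (2 / 3) : ℂ) * (x - y))
      = x ^ 24 + (253 / 4) * x ^ 18 * y ^ 6 + (1265 / 32) * x ^ 15 * y ^ 9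
          + (7659 / 256) * x ^ 12 * y ^ 12 - (1265 / 256) * x ^ 9 * y ^ 15
          + (253 / 256) * x ^ 6 * y ^ 18 + (1 / 4096) * y ^ 24 := by
  intro x y
  change eta24 _ _ = eta24 x y
  rw [eta24_mul_mul, Complex.ofReal_sqrt_pow_two_mul (by norm_num) 12, ← eta24_macWilliams x y]
  push_cast
  rfl
end

section
/- The polynomial η_{12}(x,y) = x^{12} − 11x^9y^3 − (11/8)x^3y^9 − (1/64)y^{12} satisfies η_{12}^{σ_{3/2}}(x,y) = −η_{12}(x,y). -/
/-!
`η₁₂` is a homogeneous form of degree 12, so the scalar `√(2/3)` in `σ_{3/2}` only contributes the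
factor `√(2/3) ^ 12 = 64 / 729`; the remaining linear substitution `(x, y) ↦ (x + y/2, x - y)`
multiplies `η₁₂` by `-729 / 64`.
-/

section Eta12

variable {K : Type*} [Field K]

def eta12 (x y : K) : K :=
  x ^ 12 - 11 * x ^ 9 * y ^ 3 - (11 / 8) * x ^ 3 * y ^ 9 - (1 / 64) * y ^ 12

theorem eta12_mul_mul (c x y : K) : eta12 (c * x) (c * y) = c ^ 12 * eta12 x y := by
  unfold eta12
  ring

theorem eta12_add_half_sub [CharZero K] (x y : K) :
    eta12 (x + (1 / 2) * y) (x - y) = -(729 / 64) * eta12 x y := by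
  unfold eta12
  ring

end Eta12

theorem sqrt_two_thirds_pow_twelve : ((Real.sqrt (2 / 3) : ℂ)) ^ 12 = 64 / 729 := by
  have hsq : ((Real.sqrt (2 / 3) : ℂ)) ^ 2 = 2 / 3 := by
    rw [← Complex.ofReal_pow, Real.sq_sqrt (by norm_num)]
    norm_num
  rw [show 12 = 2 * 6 from rfl, pow_mul, hsq]
  norm_num

/-- `η_{12}(x,y) = x^{12} − 11x^9y^3 − (11/8)x^3y^9 − (1/64)y^{12}` satisfies
`η_{12}^{σ_{3/2}} = −η_{12}`. -/
theorem eta12_sigma_three_halves_antiinvariant :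
    ∀ x y : ℂ,
      (fun u v : ℂ =>
        u ^ 12 - 11 * u ^ 9 * v ^ 3 - (11 / 8) * u ^ 3 * v ^ 9 - (1 / 64) * v ^ 12)
        ((Real.sqrt (2 / 3) : ℂ) * (x + (1 / 2) * y))
        ((Real.sqrt (2 / 3) : ℂ) * (x - y))
      = -(x ^ 12 - 11 * x ^ 9 * y ^ 3 - (11 / 8) * x ^ 3 * y ^ 9 - (1 / 64) * y ^ 12) := by
  intro x y
  change eta12 _ _ = -eta12 x y
  rw [eta12_mul_mul, eta12_add_half_sub, sqrt_two_thirds_pow_twelve]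
  ring
end

section
/- The polynomials η_6(x,y) = x^6 + (5/2)x^3y^3 − (1/8)y^6 and η_{12}(x,y) = x^{12} − 11x^9y^3 − (11/8)x^3y^9 − (1/64)y^{12} are algebraically independent over ℂ. -/
/-!
Jacobian criterion. If `F(f₁, …, fₙ) = 0`, the chain rule says that the vector
`((∂F/∂yⱼ)(f))ⱼ` is killed by the Jacobian matrix of `f`; when its determinant is nonzero,
every `∂F/∂yⱼ` is therefore again a relation among the `fⱼ`, of smaller degree. By descent on the
degree all partial derivatives of `F` vanish, so in characteristic zero `F` is a constant, hence
`0`. For `(η₆, η₁₂)` the Jacobian determinant is nonzero already at the point `(1, 2)`.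
-/

open MvPolynomial Matrix

namespace MvPolynomial

variable {R σ τ : Type*}

theorem pderiv_aeval [CommSemiring R] [Fintype σ] (v : σ → MvPolynomial τ R)
    (F : MvPolynomial σ R) (i : τ) :
    pderiv i (aeval v F) = ∑ j, aeval v (pderiv j F) * pderiv i (v j) := by
  classical
  induction F using MvPolynomial.induction_on with
  | C a => simp
  | add p q hp hq => simp only [map_add, hp, hq, add_mul, Finset.sum_add_distrib]
  | mul_X p k hp =>
    simp only [map_mul, aeval_X, pderiv_mul, hp, map_add, add_mul, Finset.sum_add_distrib,
      Finset.sum_mul, pderiv_X, Pi.single_apply, mul_ite, mul_one, mul_zero, apply_ite (aeval v),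
      map_zero, ite_mul, zero_mul, Finset.sum_ite_eq, Finset.mem_univ, if_true]
    exact congrArg₂ (· + ·) (Finset.sum_congr rfl fun j _ => mul_right_comm ..) rfl

theorem totalDegree_pderiv_le [CommSemiring R] (p : MvPolynomial σ R) (i : σ) :
    (pderiv i p).totalDegree ≤ p.totalDegree - 1 := by
  refine Finset.sup_le fun m hm => ?_
  rw [mem_support_iff, coeff_pderiv] at hm
  have := le_totalDegree (mem_support_iff.mpr (left_ne_zero_of_mul hm))
  rw [Finsupp.sum_add_index' (fun _ => rfl) (fun _ _ _ => rfl), Finsupp.sum_single_index rfl] at this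
  omega

theorem eq_C_of_forall_pderiv_eq_zero [CommSemiring R] [IsAddTorsionFree R]
    {p : MvPolynomial σ R} (h : ∀ i, pderiv i p = 0) : p = C (coeff 0 p) := by
  classical
  ext m
  rcases eq_or_ne m 0 with rfl | hm
  · simp
  obtain ⟨i, hi⟩ : ∃ i, m i ≠ 0 := by simpa [Finsupp.ext_iff] using hm
  have hm' : m - Finsupp.single i 1 + Finsupp.single i 1 = m :=
    tsub_add_cancel_of_le (Finsupp.single_le_iff.mpr (Nat.one_le_iff_ne_zero.mpr hi))
  have := coeff_pderiv (i := i) p (m - Finsupp.single i 1)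
  rw [h i, coeff_zero, hm', ← Nat.cast_succ, mul_comm, ← nsmul_eq_mul] at this
  rw [coeff_C, if_neg (Ne.symm hm)]
  exact (smul_eq_zero_iff_right (Nat.succ_ne_zero _)).mp this.symm

noncomputable def jacobian [CommSemiring R] {ι : Type*} (v : ι → MvPolynomial σ R) :
    Matrix ι σ (MvPolynomial σ R) :=
  Matrix.of fun j i => pderiv i (v j)

section Jacobian

variable [CommRing R] [IsDomain R] [Fintype σ] [DecidableEq σ] {v : σ → MvPolynomial σ R}

theorem aeval_pderiv_eq_zero_of_det_jacobian_ne_zero (hv : (jacobian v).det ≠ 0)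
    {F : MvPolynomial σ R} (hF : aeval v F = 0) (j : σ) : aeval v (pderiv j F) = 0 := by
  have hchain : (fun j => aeval v (pderiv j F)) ᵥ* jacobian v = 0 := by
    funext i
    rw [Pi.zero_apply, ← map_zero (pderiv i), ← hF, pderiv_aeval]
    rfl
  by_contra hj
  exact hv (exists_vecMul_eq_zero_iff.mp ⟨_, Function.ne_iff.mpr ⟨j, hj⟩, hchain⟩)

theorem algebraicIndependent_of_det_jacobian_ne_zero [CharZero R] (hv : (jacobian v).det ≠ 0) :
    AlgebraicIndependent R v := by
  rw [algebraicIndependent_iff]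
  intro F hF
  induction hd : F.totalDegree using Nat.strong_induction_on generalizing F with
  | _ d ih =>
    have hC : F = C (coeff 0 F) := by
      rcases Nat.eq_zero_or_pos d with rfl | hpos
      · exact totalDegree_eq_zero_iff_eq_C.mp hd
      · refine eq_C_of_forall_pderiv_eq_zero fun i => ih _ ?_ _
          (aeval_pderiv_eq_zero_of_det_jacobian_ne_zero hv hF i) rfl
        exact hd ▸ (totalDegree_pderiv_le F i).trans_lt (Nat.sub_lt (hd ▸ hpos) one_pos)
    rw [hC, aeval_C, algebraMap_eq, C_eq_zero] at hF
    rw [hC, hF, map_zero]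

end Jacobian

end MvPolynomial

/-- `η_6` and `η_{12}` are algebraically independent over `ℂ`. -/
theorem eta6_eta12_algebraically_independent :
    AlgebraicIndependent ℂ
      ![(X 0 ^ 6 + C (5 / 2 : ℂ) * X 0 ^ 3 * X 1 ^ 3 - C (1 / 8 : ℂ) * X 1 ^ 6 :
          MvPolynomial (Fin 2) ℂ),
        (X 0 ^ 12 - C (11 : ℂ) * X 0 ^ 9 * X 1 ^ 3 - C (11 / 8 : ℂ) * X 0 ^ 3 * X 1 ^ 9
          - C (1 / 64 : ℂ) * X 1 ^ 12 : MvPolynomial (Fin 2) ℂ)] := by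
  refine algebraicIndependent_of_det_jacobian_ne_zero fun h => ?_
  have := congrArg (eval ![1, 2]) h
  norm_num [det_fin_two, jacobian, pderiv_X] at this
end

section
/- The zeta polynomial of η_6(x,y) = x^6 + (5/2)x^3y^3 − (1/8)y^6 for q = 3/2 is P_6(T) = (3T^2 + 3T + 2)/8; that is, in the formal power series expansion of (P_6(T)/((1−T)(1−(3/2)T)))·(y(1−T)+xT)^6 in T, the coefficient of T^{6−3} = T^3 equals (η_6(x,y) − x^6)/(3/2 − 1) = 2·((5/2)x^3y^3 − (1/8)y^6). -/
open Polynomial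

theorem Polynomial.coeff_C_add_C_mul_X_pow {R : Type*} [CommSemiring R] (a b : R) (n k : ℕ) :
    ((C a + C b * X) ^ n).coeff k = n.choose k * a ^ (n - k) * b ^ k := by
  have hterm : ∀ m, (C b * X) ^ m * C a ^ (n - m) * (n.choose m : R[X]) =
      C (n.choose m * a ^ (n - m) * b ^ m) * X ^ m := fun m => by
    simp only [mul_pow, C_mul, C_pow, C_eq_natCast]; ring
  rw [add_comm, add_pow, finsetSum_coeff]
  simp only [hterm, coeff_C_mul_X_pow, Finset.sum_ite_eq, Finset.mem_range]
  split_ifs with hk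
  · rfl
  · simp [Nat.choose_eq_zero_of_lt (by omega : n < k)]

/-- `1/((1−T)(1−qT))` has `T^m` coefficient `(q^{m+1}−1)/(q−1)`, which turns the coefficient
of `T³` in the power series into the finite sum below. -/
theorem zeta_polynomial_eta6 :
    (C (3 / 8 : ℂ) * X ^ 2 + C (3 / 8 : ℂ) * X + C (1 / 4 : ℂ)).natDegree ≤ 6 - 3 ∧
    ∀ x y : ℂ,
      (∑ j ∈ Finset.range 4,
          ((C (3 / 8 : ℂ) * X ^ 2 + C (3 / 8 : ℂ) * X + C (1 / 4 : ℂ))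
              * (C y * (1 - X) + C x * X) ^ 6).coeff j
            * (((3 / 2 : ℂ)) ^ (4 - j) - 1) / ((3 / 2 : ℂ) - 1))
      = ((x ^ 6 + (5 / 2) * x ^ 3 * y ^ 3 - (1 / 8) * y ^ 6) - x ^ 6) / ((3 / 2 : ℂ) - 1) := by
  refine ⟨by compute_degree!, fun x y => ?_⟩
  have hline : C y * (1 - X) + C x * X = C y + C (x - y) * X := by rw [C_sub]; ring
  simp only [hline, Finset.sum_range_succ, Finset.sum_range_zero, add_mul, mul_assoc, coeff_add,
    coeff_C_mul, coeff_X_pow_mul', coeff_X_mul, coeff_C_add_C_mul_X_pow]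
  norm_num [Nat.choose]
  ring
end

section
/- Every Type III formal weight enumerator W(x,y) of degree n of the form x^n + Σ_{i=d}^n A_i x^{n−i}y^i, with nonzero coefficients only for exponents i divisible by 3, satisfies d ≤ 3⌊(n−6)/12⌋ + 3, provided W lies in the ring ℂ[W_4, ψ_6] with W_4 = x^4 + 8xy^3 and ψ_6 = x^6 − 20x^3y^3 − 8y^6. -/
/-!
Since `σ₃` fixes `W₄` and negates `ψ₆`, an anti-invariant homogeneous `W ∈ ℂ[W₄, ψ₆]` of
degree `n` is a combination of the `W₄ ^ a * ψ₆ ^ b` with `b` odd and `4a + 6b = n`; in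
particular `n = 4e + 6`. Put `x = 1` and write `P = W₄(1, y) = 1 + 8y³`, `Q = ψ₆(1, y)` and
`I = 1 / (1 - y³)`. With `m = ⌊e / 3⌋ + 1` and `s = 2 - e % 3`, the linear functional
`F ↦ [y^(3m)] F(1, y) P^s I^(3m+1)` kills every such `P^a Q^b`: the relation
`Q² = P³ - 64y³(1 - y³)³` reduces to `b = 1`, where it is `[y^(3l+3)] Q P^(3l+2) I^(3l+4)`,
and this vanishes because `Q P^(3l+2) I^(3l+4) = (P I)^(3l+3) - 27y³ P^(3l+2) I^(3l+4)` while
`(P I)' = 27y² I²`. If `d > 3m`, however, then `W(1, y) ≡ 1 mod y^(3m+1)`, so the functional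
takes on `W` the value `[y^(3m)] P^s I^(3m+1)`, a positive integer.
-/

noncomputable section

namespace TypeIII

open scoped PowerSeries

section PowerSeries

open PowerSeries

variable {R : Type*}

def invOneSubXCube [Semiring R] : R⟦X⟧ := mk fun t => if 3 ∣ t then 1 else 0

def w4Series [Semiring R] : R⟦X⟧ := 1 + 8 * X ^ 3

def psi6Series [Ring R] : R⟦X⟧ := 1 - 20 * X ^ 3 - 8 * X ^ 6

theorem coeff_mul_eq_of_X_pow_dvd_sub_one [Ring R] {f g : R⟦X⟧} {d k : ℕ}
    (hf : X ^ d ∣ f - 1) (hk : k < d) : coeff k (f * g) = coeff k g := by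
  have h := X_pow_dvd_iff.1 (hf.mul_right g) k hk
  rwa [sub_mul, one_mul, map_sub, sub_eq_zero] at h

section CommRing

variable [CommRing R]

theorem one_sub_X_pow_three_mul_invOneSubXCube :
    (1 - X ^ 3 : R⟦X⟧) * invOneSubXCube = 1 := by
  ext t
  simp only [sub_mul, one_mul, map_sub, coeff_X_pow_mul', invOneSubXCube, coeff_mk, coeff_one]
  split_ifs <;> first | omega | simp

theorem one_sub_X_pow_three_pow_mul_invOneSubXCube_pow (k i : ℕ) :
    (1 - X ^ 3 : R⟦X⟧) ^ k * invOneSubXCube ^ (k + i) = invOneSubXCube ^ i := by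
  rw [pow_add, ← mul_assoc, ← mul_pow, one_sub_X_pow_three_mul_invOneSubXCube, one_pow, one_mul]

theorem psi6Series_eq_w4Series_mul_sub :
    (psi6Series : R⟦X⟧) = w4Series * (1 - X ^ 3) - 27 * X ^ 3 := by
  rw [psi6Series, w4Series]; ring

theorem psi6Series_sq :
    (psi6Series : R⟦X⟧) ^ 2 = w4Series ^ 3 - 64 * X ^ 3 * (1 - X ^ 3) ^ 3 := by
  rw [psi6Series, w4Series]; ring

theorem derivative_invOneSubXCube :
    d⁄dX R invOneSubXCube = 3 * X ^ 2 * invOneSubXCube ^ 2 := by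
  have h := congrArg (d⁄dX R) (one_sub_X_pow_three_mul_invOneSubXCube (R := R))
  rw [Derivation.leibniz, derivative_one, map_sub, derivative_one, derivative_pow,
    derivative_X, smul_eq_mul, smul_eq_mul] at h
  linear_combination
    invOneSubXCube * h - d⁄dX R invOneSubXCube * one_sub_X_pow_three_mul_invOneSubXCube (R := R)

theorem derivative_w4Series : d⁄dX R w4Series = 24 * X ^ 2 := by
  rw [w4Series, map_add, derivative_one, Derivation.leibniz, derivative_pow, derivative_X,
    show (8 : R⟦X⟧) = (8 : ℕ) by norm_cast, Derivation.map_natCast, smul_eq_mul, smul_zero]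
  push_cast
  ring

theorem derivative_w4Series_mul_invOneSubXCube :
    d⁄dX R (w4Series * invOneSubXCube) = 27 * X ^ 2 * invOneSubXCube ^ 2 := by
  rw [Derivation.leibniz, derivative_invOneSubXCube, derivative_w4Series, smul_eq_mul, smul_eq_mul,
    w4Series]
  linear_combination -24 * X ^ 2 * invOneSubXCube * one_sub_X_pow_three_mul_invOneSubXCube (R := R)

theorem coeff_psi6Series_mul_w4Series_pow_mul_invOneSubXCube_pow [IsAddTorsionFree R] (l : ℕ) :
    coeff (3 * l + 3)
      (psi6Series * w4Series ^ (3 * l + 2) * invOneSubXCube ^ (3 * l + 4) : R⟦X⟧) = 0 := by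
  set G : R⟦X⟧ := w4Series ^ (3 * l + 2) * invOneSubXCube ^ (3 * l + 4)
  set F : R⟦X⟧ := (w4Series * invOneSubXCube) ^ (3 * l + 2 + 1)
  have hsplit : psi6Series * w4Series ^ (3 * l + 2) * invOneSubXCube ^ (3 * l + 4) =
      F - 27 • (X ^ 3 * G) := by
    rw [psi6Series_eq_w4Series_mul_sub]
    linear_combination
      w4Series ^ (3 * l + 3) * invOneSubXCube ^ (3 * l + 3) *
        one_sub_X_pow_three_mul_invOneSubXCube (R := R)
  have hF : d⁄dX R F = (3 * l + 3) • 27 • (X ^ 2 * G) := by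
    rw [derivative_pow, derivative_w4Series_mul_invOneSubXCube, Nat.add_sub_cancel]
    push_cast
    ring
  have hcoeff := coeff_derivative F (3 * l + 2)
  rw [hF, map_nsmul, map_nsmul, coeff_X_pow_mul] at hcoeff
  rw [hsplit, map_sub, map_nsmul, coeff_X_pow_mul]
  refine nsmul_right_injective (n := 3 * l + 3) (by omega) ?_
  simp only [smul_sub, smul_zero]
  rw [hcoeff, nsmul_eq_mul]
  push_cast
  ring

theorem coeff_w4Series_pow_mul_psi6Series_pow_mul_invOneSubXCube_pow [IsAddTorsionFree R]
    {c j m : ℕ} (h : c + 3 * j + 1 = 3 * m) :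
    coeff (3 * m) (w4Series ^ c * psi6Series ^ (2 * j + 1) * invOneSubXCube ^ (3 * m + 1) :
      R⟦X⟧) = 0 := by
  induction j generalizing c m with
  | zero =>
    obtain ⟨l, rfl, rfl⟩ : ∃ l, m = l + 1 ∧ c = 3 * l + 2 := ⟨m - 1, by omega, by omega⟩
    rw [mul_zero, zero_add, pow_one, mul_comm (w4Series ^ _ : R⟦X⟧)]
    exact coeff_psi6Series_mul_w4Series_pow_mul_invOneSubXCube_pow l
  | succ j ih =>
    obtain ⟨m, rfl⟩ : ∃ m', m = m' + 1 := ⟨m - 1, by omega⟩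
    have hexpand : (w4Series : R⟦X⟧) ^ c * psi6Series ^ (2 * (j + 1) + 1) *
          invOneSubXCube ^ (3 * (m + 1) + 1) =
        w4Series ^ (c + 3) * psi6Series ^ (2 * j + 1) * invOneSubXCube ^ (3 * (m + 1) + 1) -
          64 • (X ^ 3 *
            (w4Series ^ c * psi6Series ^ (2 * j + 1) * invOneSubXCube ^ (3 * m + 1))) := by
      rw [← one_sub_X_pow_three_pow_mul_invOneSubXCube_pow 3 (3 * m + 1)]
      linear_combination w4Series ^ c * psi6Series ^ (2 * j + 1) * invOneSubXCube ^ (3 * m + 4) *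
        psi6Series_sq (R := R)
    rw [hexpand, map_sub, ih (by omega), map_nsmul, mul_add, mul_one, coeff_X_pow_mul,
      ih (by omega), smul_zero, sub_zero]

end CommRing

section Positivity

theorem coeff_zero_mul_coeff_le_coeff_mul (f g : ℕ⟦X⟧) (n : ℕ) :
    coeff 0 f * coeff n g ≤ coeff n (f * g) := by
  rw [coeff_mul]
  exact Finset.single_le_sum (f := fun p : ℕ × ℕ => coeff p.1 f * coeff p.2 g) (a := (0, n))
    (fun _ _ => Nat.zero_le _) (Finset.HasAntidiagonal.mem_antidiagonal.2 (zero_add n))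

variable [Semiring R]

theorem constantCoeff_w4Series : constantCoeff (w4Series : R⟦X⟧) = 1 := by
  simp [w4Series, map_ofNat]

theorem map_w4Series {S : Type*} [Semiring S] (f : R →+* S) : map f w4Series = w4Series := by
  simp [w4Series, map_ofNat]

theorem map_invOneSubXCube {S : Type*} [Semiring S] (f : R →+* S) :
    map f invOneSubXCube = invOneSubXCube := by
  ext t
  simp only [invOneSubXCube, coeff_map, coeff_mk]
  split_ifs <;> simp

theorem coeff_w4Series_pow_mul_invOneSubXCube_pow_ne_zero [CharZero R] (s m : ℕ) :
    coeff (3 * m) (w4Series ^ s * invOneSubXCube ^ (3 * m + 1) : R⟦X⟧) ≠ 0 := by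
  have hpos : 1 ≤ coeff (3 * m) (w4Series ^ s * invOneSubXCube ^ (3 * m + 1) : ℕ⟦X⟧) :=
    calc 1 = coeff 0 (w4Series ^ s : ℕ⟦X⟧) *
          (coeff 0 (invOneSubXCube ^ (3 * m) : ℕ⟦X⟧) * coeff (3 * m) invOneSubXCube) := by
          simp [coeff_zero_eq_constantCoeff_apply, constantCoeff_w4Series, invOneSubXCube]
      _ ≤ coeff 0 (w4Series ^ s : ℕ⟦X⟧) *
          coeff (3 * m) (invOneSubXCube ^ (3 * m) * invOneSubXCube : ℕ⟦X⟧) := by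
          gcongr
          exact coeff_zero_mul_coeff_le_coeff_mul _ _ _
      _ ≤ _ := by
          rw [← pow_succ]
          exact coeff_zero_mul_coeff_le_coeff_mul _ _ _
  rw [← map_w4Series (Nat.castRingHom R), ← map_invOneSubXCube (Nat.castRingHom R), ← map_pow,
    ← map_pow, ← map_mul, coeff_map, eq_natCast, Nat.cast_ne_zero]
  omega

end Positivity

end PowerSeries

section Span

variable {R M : Type*} [Semiring R] [AddCommMonoid M] [Module R M]

theorem mem_span_of_map_eq_self {f : M →ₗ[R] M} {s t : Set M} {x : M}
    (hx : x ∈ Submodule.span R s) (hfx : f x = x) (hf : ∀ y ∈ s, f y ∈ Submodule.span R t) :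
    x ∈ Submodule.span R t :=
  hfx ▸ (Submodule.map_span_le f s _).2 hf (Submodule.mem_map_of_mem hx)

theorem mem_span_pow_mul_pow_odd {K A : Type*} [Field K] [NeZero (2 : K)] [CommRing A]
    [Algebra K A] {σ : A →ₐ[K] A} {g h x : A} (hg : σ g = g) (hh : σ h = -h)
    (hx : x ∈ Algebra.adjoin K {g, h}) (hσx : σ x = -x) :
    x ∈ Submodule.span K ((fun ab : ℕ × ℕ => g ^ ab.1 * h ^ ab.2) '' {ab | Odd ab.2}) := by
  have hx' : x ∈ Submodule.span K (Submonoid.closure {g, h} : Set A) := by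
    rw [← Algebra.adjoin_eq_span]; exact hx
  have halves (y : A) : (2⁻¹ : K) • y + (2⁻¹ : K) • y = y := by
    rw [← add_smul, ← two_mul, mul_inv_cancel₀ two_ne_zero, one_smul]
  refine mem_span_of_map_eq_self (f := (2⁻¹ : K) • (LinearMap.id - σ.toLinearMap)) hx' ?_ ?_
  · simp [hσx, halves]
  · intro y hy
    obtain ⟨a, b, rfl⟩ := (Submonoid.mem_closure_pair g h y).1 hy
    rcases Nat.even_or_odd b with hb | hb
    · simp [hg, hh, hb.neg_pow]
    · apply Submodule.subset_span
      refine ⟨(a, b), hb, ?_⟩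
      simp [hg, hh, hb.neg_pow, halves]

theorem mem_span_pow_mul_pow_of_isHomogeneous {K ι : Type*} [CommSemiring K]
    {g h x : MvPolynomial ι K} {p q n : ℕ} {S : Set (ℕ × ℕ)}
    (hg : g.IsHomogeneous p) (hh : h.IsHomogeneous q) (hx : x.IsHomogeneous n)
    (hxS : x ∈ Submodule.span K ((fun ab : ℕ × ℕ => g ^ ab.1 * h ^ ab.2) '' S)) :
    x ∈ Submodule.span K
      ((fun ab : ℕ × ℕ => g ^ ab.1 * h ^ ab.2) '' {ab ∈ S | p * ab.1 + q * ab.2 = n}) := by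
  refine mem_span_of_map_eq_self (f := MvPolynomial.homogeneousComponent n) hxS ?_ ?_
  · rw [MvPolynomial.homogeneousComponent_of_mem
      ((MvPolynomial.mem_homogeneousSubmodule n x).2 hx), if_pos rfl]
  · rintro _ ⟨ab, hab, rfl⟩
    rw [MvPolynomial.homogeneousComponent_of_mem
      ((MvPolynomial.mem_homogeneousSubmodule _ _).2 ((hg.pow ab.1).mul (hh.pow ab.2)))]
    split_ifs with hn
    · exact Submodule.subset_span ⟨ab, ⟨hab, hn.symm⟩, rfl⟩
    · exact zero_mem _

end Span

section MvPolynomial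

open MvPolynomial

variable {K : Type*}

def w4 [CommSemiring K] : MvPolynomial (Fin 2) K := X 0 ^ 4 + C 8 * X 0 * X 1 ^ 3

def psi6 [CommRing K] : MvPolynomial (Fin 2) K := X 0 ^ 6 - C 20 * X 0 ^ 3 * X 1 ^ 3 - C 8 * X 1 ^ 6

theorem isHomogeneous_w4 [CommSemiring K] : (w4 : MvPolynomial (Fin 2) K).IsHomogeneous 4 :=
  (isHomogeneous_X_pow 0 4).add ((isHomogeneous_C_mul_X 8 0).mul (isHomogeneous_X_pow 1 3))

theorem isHomogeneous_psi6 [CommRing K] : (psi6 : MvPolynomial (Fin 2) K).IsHomogeneous 6 :=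
  ((isHomogeneous_X_pow 0 6).sub
    ((isHomogeneous_C_mul_X_pow 20 0 3).mul (isHomogeneous_X_pow 1 3))).sub
      (isHomogeneous_C_mul_X_pow 8 1 6)

theorem isHomogeneous_X_pow_add_sum [CommSemiring K] (n d : ℕ) (A : ℕ → K) :
    (X 0 ^ n + ∑ i ∈ Finset.Icc d n, C (A i) * X 0 ^ (n - i) * X 1 ^ i :
      MvPolynomial (Fin 2) K).IsHomogeneous n := by
  refine (isHomogeneous_X_pow 0 n).add (IsHomogeneous.sum _ _ _ fun i hi => ?_)
  have h := (isHomogeneous_C_mul_X_pow (A i) (0 : Fin 2) (n - i)).mul (isHomogeneous_X_pow 1 i)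
  rwa [Nat.sub_add_cancel (Finset.mem_Icc.1 hi).2] at h

def dehomogenize [CommSemiring K] : MvPolynomial (Fin 2) K →ₐ[K] K⟦X⟧ :=
  aeval ![1, PowerSeries.X]

theorem dehomogenize_w4 [CommSemiring K] :
    dehomogenize (w4 : MvPolynomial (Fin 2) K) = w4Series := by
  simp [dehomogenize, w4, w4Series, map_ofNat]

theorem dehomogenize_psi6 [CommRing K] :
    dehomogenize (psi6 : MvPolynomial (Fin 2) K) = psi6Series := by
  simp [dehomogenize, psi6, psi6Series, map_ofNat]

theorem X_pow_dvd_dehomogenize_sub_one [CommRing K] (n d : ℕ) (A : ℕ → K) :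
    PowerSeries.X ^ d ∣
      dehomogenize (X 0 ^ n + ∑ i ∈ Finset.Icc d n, C (A i) * X 0 ^ (n - i) * X 1 ^ i) - 1 := by
  simp only [dehomogenize, map_add, map_pow, aeval_X, Matrix.cons_val_zero, one_pow, map_sum,
    map_mul, algHom_C, PowerSeries.algebraMap_eq, mul_one, Matrix.cons_val_one,
    add_sub_cancel_left]
  exact Finset.dvd_sum fun i hi => (pow_dvd_pow _ (Finset.mem_Icc.1 hi).1).mul_left _

theorem coeff_dehomogenize_mul_eq_zero [CommRing K] [IsAddTorsionFree K] {n m s : ℕ}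
    (hnms : n + 4 * s = 12 * m + 2) {F : MvPolynomial (Fin 2) K}
    (hF : F ∈ Submodule.span K ((fun ab : ℕ × ℕ => w4 ^ ab.1 * psi6 ^ ab.2) ''
      {ab | Odd ab.2 ∧ 4 * ab.1 + 6 * ab.2 = n})) :
    PowerSeries.coeff (3 * m)
      (dehomogenize F * (w4Series ^ s * invOneSubXCube ^ (3 * m + 1))) = 0 := by
  let Φ : MvPolynomial (Fin 2) K →ₗ[K] K := PowerSeries.coeff (3 * m) ∘ₗ
    LinearMap.mulRight K (w4Series ^ s * invOneSubXCube ^ (3 * m + 1)) ∘ₗ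
      dehomogenize.toLinearMap
  refine (Submodule.span_le (p := LinearMap.ker Φ)).2 ?_ hF
  rintro _ ⟨⟨a, b⟩, ⟨⟨j, rfl⟩, hab⟩, rfl⟩
  have hsum : a + s + 3 * j + 1 = 3 * m := by omega
  simp only [SetLike.mem_coe, LinearMap.mem_ker, Φ, LinearMap.comp_apply, AlgHom.toLinearMap_apply,
    LinearMap.mulRight_apply, map_mul, map_pow, dehomogenize_w4, dehomogenize_psi6]
  convert coeff_w4Series_pow_mul_psi6Series_pow_mul_invOneSubXCube_pow (R := K) hsum using 2
  ring

/-- `σ₃` is `sigma3 (1 / √3)`. -/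
def sigma3 [CommRing K] (u : K) : MvPolynomial (Fin 2) K →ₐ[K] MvPolynomial (Fin 2) K :=
  aeval ![C u * (X 0 + 2 * X 1), C u * (X 0 - X 1)]

variable [CommRing K]

theorem eval_sigma3 (u x y : K) (p : MvPolynomial (Fin 2) K) :
    eval ![x, y] (sigma3 u p) = eval ![u * (x + 2 * y), u * (x - y)] p := by
  rw [sigma3, aeval_eq_bind₁, eval, eval₂Hom_bind₁]
  congr
  ext i
  fin_cases i <;> simp

theorem sigma3_w4 {u : K} (hu : 3 * u ^ 2 = 1) : sigma3 u w4 = w4 := by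
  have h : 3 * (C u : MvPolynomial (Fin 2) K) ^ 2 = 1 := by simpa [map_ofNat] using congrArg C hu
  simp only [sigma3, aeval_eq_bind₁, w4, map_ofNat, map_add, map_pow, bind₁_X_right,
    Matrix.cons_val_zero, map_mul, Matrix.cons_val_one]
  linear_combination (X 0 ^ 4 + 8 * X 0 * X 1 ^ 3 : MvPolynomial (Fin 2) K) * (3 * C u ^ 2 + 1) * h

theorem sigma3_psi6 {u : K} (hu : 3 * u ^ 2 = 1) : sigma3 u psi6 = -psi6 := by
  have h : 3 * (C u : MvPolynomial (Fin 2) K) ^ 2 = 1 := by simpa [map_ofNat] using congrArg C hu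
  simp only [sigma3, aeval_eq_bind₁, psi6, map_ofNat, map_sub, map_pow, bind₁_X_right,
    Matrix.cons_val_zero, map_mul, Matrix.cons_val_one, neg_sub]
  linear_combination (-(X 0 ^ 6 - 20 * X 0 ^ 3 * X 1 ^ 3 - 8 * X 1 ^ 6) : MvPolynomial (Fin 2) K) *
    (9 * C u ^ 4 + 3 * C u ^ 2 + 1) * h

end MvPolynomial

end TypeIII

open TypeIII

open MvPolynomial

theorem typeIII_mallows_sloane_bound_general
    (n d : ℕ) (A : ℕ → ℂ) (W : MvPolynomial (Fin 2) ℂ)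
    (hW : W = X 0 ^ n + ∑ i ∈ Finset.Icc d n, C (A i) * X 0 ^ (n - i) * X 1 ^ i)
    (hring : W ∈ Algebra.adjoin ℂ
      ({X 0 ^ 4 + C (8 : ℂ) * X 0 * X 1 ^ 3,
        X 0 ^ 6 - C (20 : ℂ) * X 0 ^ 3 * X 1 ^ 3 - C (8 : ℂ) * X 1 ^ 6} :
        Set (MvPolynomial (Fin 2) ℂ)))
    (hfwe : ∀ x y : ℂ,
      eval ![(x + 2 * y) / (Real.sqrt 3 : ℂ), (x - y) / (Real.sqrt 3 : ℂ)] W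
        = -eval ![x, y] W) :
    (d : ℤ) ≤ 3 * (((n : ℤ) - 6) / 12) + 3 := by
  rcases Nat.eq_zero_or_pos d with rfl | hd
  · omega
  set u : ℂ := (Real.sqrt 3 : ℂ)⁻¹
  have hu : 3 * u ^ 2 = 1 := by
    rw [inv_pow, ← Complex.ofReal_pow, Real.sq_sqrt (by norm_num)]
    norm_num
  have hσW : sigma3 u W = -W := MvPolynomial.funext fun v => by
    have hv : v = ![v 0, v 1] := by ext i; fin_cases i <;> rfl
    rw [hv, eval_sigma3, map_neg, ← hfwe, div_eq_inv_mul, div_eq_inv_mul]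
  have hspan := mem_span_pow_mul_pow_of_isHomogeneous (n := n) isHomogeneous_w4 isHomogeneous_psi6
    (hW ▸ isHomogeneous_X_pow_add_sum n d A)
    (mem_span_pow_mul_pow_odd (sigma3_w4 hu) (sigma3_psi6 hu) hring hσW)
  have hdvd : PowerSeries.X ^ d ∣ dehomogenize W - 1 :=
    hW ▸ X_pow_dvd_dehomogenize_sub_one n d A
  have hW0 : W ≠ 0 := by
    rintro rfl
    simpa using coeff_mul_eq_of_X_pow_dvd_sub_one (g := 1) hdvd hd
  obtain ⟨⟨a, _⟩, ⟨j, rfl⟩, hn⟩ :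
      {ab : ℕ × ℕ | Odd ab.2 ∧ 4 * ab.1 + 6 * ab.2 = n}.Nonempty := by
    by_contra! hempty
    exact hW0 (by simpa [hempty] using hspan)
  by_contra! hlt
  have key := coeff_dehomogenize_mul_eq_zero (m := (a + 3 * j) / 3 + 1)
    (s := 2 - (a + 3 * j) % 3) (by omega) hspan
  rw [coeff_mul_eq_of_X_pow_dvd_sub_one hdvd (by omega)] at key
  exact coeff_w4Series_pow_mul_invOneSubXCube_pow_ne_zero _ _ key

/-- Analog of the Mallows–Sloane bound for Type III formal weight enumerators:
if `W = x^n + Σ_{i=d}^n A_i x^{n−i} y^i ∈ ℂ[W_4, ψ_6]` with `A_d ≠ 0`, all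
`y`-exponents divisible by 3, and `W^{σ_3} = −W`, then `d ≤ 3⌊(n−6)/12⌋ + 3`. -/
theorem typeIII_mallows_sloane_bound
    (n d : ℕ) (A : ℕ → ℂ) (W : MvPolynomial (Fin 2) ℂ)
    (hW : W = X 0 ^ n + ∑ i ∈ Finset.Icc d n, C (A i) * X 0 ^ (n - i) * X 1 ^ i)
    (hd : A d ≠ 0)
    (hdiv : ∀ i, A i ≠ 0 → 3 ∣ i)
    (hring : W ∈ Algebra.adjoin ℂ
      ({X 0 ^ 4 + C (8 : ℂ) * X 0 * X 1 ^ 3,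
        X 0 ^ 6 - C (20 : ℂ) * X 0 ^ 3 * X 1 ^ 3 - C (8 : ℂ) * X 1 ^ 6} :
        Set (MvPolynomial (Fin 2) ℂ)))
    (hfwe : ∀ x y : ℂ,
      eval ![(x + 2 * y) / (Real.sqrt 3 : ℂ), (x - y) / (Real.sqrt 3 : ℂ)] W
        = -eval ![x, y] W) :
    (d : ℤ) ≤ 3 * (((n : ℤ) - 6) / 12) + 3 :=
  typeIII_mallows_sloane_bound_general n d A W hW hring hfwe
end
end
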